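/- Let M be a twice continuously differentiable Orlicz function with M'(0)=0 and ∫_0^∞ y M''(y) dy < ∞. Define F̄(x) = (1/x) M'(1/x) − M(1/x) for x > 0. Then F̄ is nonincreasing on (0,∞), F̄(x) → 0 as x → ∞, and F̄(x) → ∫_0^∞ y M''(y) dy as x → 0⁺; in particular, after normalization by ∫_0^∞ y M''(y) dy, the function 1 − F̄ is a cumulative distribution function on (0,∞). -/

import Mathlib

open MeasureTheory Set Filter Topology

/-! The substitution `t = 1/x` turns `F̄` into `G(t) = t M'(t) - M(t)`, whose derivative is
`t M''(t)`. Convexity makes `G` nondecreasing, and since `G(0) = 0` the fundamental theorem of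
calculus gives `G(t) = ∫_0^t y M''(y) dy`, which tends to the full integral as `t → ∞`. -/

section OrliczTail

variable {M : ℝ → ℝ}

/-- As `M b - M a ≤ M'(b) (b - a)`, the increment from `a` to `b` is at least
`a (M'(b) - M'(a)) ≥ 0`. -/
theorem ConvexOn.monotoneOn_mul_deriv_sub {S : Set ℝ} (hconv : ConvexOn ℝ S M)
    (hdiff : ∀ x ∈ S, DifferentiableAt ℝ M x) (hS : S ⊆ Ici 0) :
    MonotoneOn (fun s => s * deriv M s - M s) S := by
  intro a ha b hb hab
  rcases hab.eq_or_lt with rfl | hlt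
  · rfl
  have hslope : M b - M a ≤ deriv M b * (b - a) := by
    have := hconv.slope_le_deriv ha hb hlt (hdiff b hb)
    rwa [slope_def_field, div_le_iff₀ (sub_pos.2 hlt)] at this
  have hderiv : deriv M a ≤ deriv M b := hconv.monotoneOn_deriv hdiff ha hb hab
  have ha₀ : 0 ≤ a := hS ha
  dsimp only
  linarith [mul_le_mul_of_nonneg_left hderiv ha₀]

theorem hasDerivAt_mul_deriv_sub {t : ℝ} (hM : ContDiffAt ℝ 2 M t) :
    HasDerivAt (fun s => s * deriv M s - M s) (t * deriv (deriv M) t) t := by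
  have hM' : HasDerivAt M (deriv M t) t := (hM.differentiableAt (by norm_num)).hasDerivAt
  have hM'' : HasDerivAt (deriv M) (deriv (deriv M) t) t :=
    ((hM.derivWithin (m := 1) (by norm_num)).differentiableAt one_ne_zero).hasDerivAt
  exact (((hasDerivAt_id' t).mul hM'').sub hM').congr_deriv (by ring)

/-- `deriv M 0` need not be the one-sided derivative, but it only enters multiplied by `0`. -/
theorem continuousOn_mul_deriv_sub (hM : ContDiffOn ℝ 1 M (Ici 0)) :
    ContinuousOn (fun s => s * deriv M s - M s) (Ici 0) := by
  have hwithin : ContinuousOn (fun s => s * derivWithin M (Ici 0) s) (Ici 0) :=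
    continuousOn_id.mul (hM.continuousOn_derivWithin (uniqueDiffOn_Ici 0) le_rfl)
  refine (hwithin.congr fun s hs => ?_).sub hM.continuousOn
  rcases (mem_Ici.1 hs).eq_or_lt with rfl | hpos
  · simp
  · rw [derivWithin_of_mem_nhds (Ici_mem_nhds hpos)]

theorem tendsto_mul_deriv_sub_nhdsGT_zero (hM : ContDiffOn ℝ 1 M (Ici 0)) (hM0 : M 0 = 0) :
    Tendsto (fun s => s * deriv M s - M s) (𝓝[>] 0) (𝓝 0) := by
  have := (continuousOn_mul_deriv_sub hM 0 self_mem_Ici).mono_left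
    (nhdsWithin_mono _ Ioi_subset_Ici_self)
  simpa [hM0] using this

theorem mul_deriv_sub_eq_intervalIntegral (hM : ContDiffOn ℝ 2 M (Ici 0)) (hM0 : M 0 = 0)
    {t : ℝ} (ht : 0 ≤ t)
    (hint : IntervalIntegrable (fun y => y * deriv (deriv M) y) volume 0 t) :
    t * deriv M t - M t = ∫ y in 0..t, y * deriv (deriv M) y := by
  rw [intervalIntegral.integral_eq_sub_of_hasDerivAt_of_le ht
    ((continuousOn_mul_deriv_sub (hM.of_le one_le_two)).mono Icc_subset_Ici_self)
    (fun y hy => hasDerivAt_mul_deriv_sub (hM.contDiffAt (Ici_mem_nhds hy.1))) hint]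
  simp [hM0]

theorem tendsto_mul_deriv_sub_atTop (hM : ContDiffOn ℝ 2 M (Ici 0)) (hM0 : M 0 = 0)
    (hint : IntegrableOn (fun y => y * deriv (deriv M) y) (Ioi 0)) :
    Tendsto (fun s => s * deriv M s - M s) atTop
      (𝓝 (∫ y in Ioi 0, y * deriv (deriv M) y)) := by
  refine (intervalIntegral_tendsto_integral_Ioi 0 hint tendsto_id).congr' ?_
  filter_upwards [eventually_ge_atTop 0] with t ht
  refine (mul_deriv_sub_eq_intervalIntegral hM hM0 ht ?_).symm
  exact (intervalIntegrable_iff_integrableOn_Ioc_of_le ht).2 (hint.mono_set Ioc_subset_Ioi_self)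

end OrliczTail

theorem orlicz_tail_is_distribution_general
    (M : ℝ → ℝ)
    (hconv : ConvexOn ℝ (Set.Ici 0) M)
    (hM0 : M 0 = 0)
    (hC2 : ContDiffOn ℝ 2 M (Set.Ici 0))
    (hfin : IntegrableOn (fun y => y * deriv (deriv M) y) (Set.Ioi (0:ℝ)))
    (F : ℝ → ℝ)
    (hF : ∀ x > (0:ℝ), F x = (1/x) * deriv M (1/x) - M (1/x)) :
    AntitoneOn F (Set.Ioi 0) ∧
    Tendsto F atTop (nhds 0) ∧
    Tendsto F (nhdsWithin 0 (Set.Ioi 0))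
      (nhds (∫ y in Set.Ioi (0:ℝ), y * deriv (deriv M) y)) := by
  set G : ℝ → ℝ := fun s => s * deriv M s - M s
  have hFG : ∀ x > (0:ℝ), F x = G x⁻¹ := fun x hx => by simp [hF x hx, G]
  have hG_mono : MonotoneOn G (Ioi 0) :=
    (hconv.subset Ioi_subset_Ici_self (convex_Ioi 0)).monotoneOn_mul_deriv_sub
      (fun x hx => (hC2.contDiffAt (Ici_mem_nhds hx)).differentiableAt two_ne_zero)
      Ioi_subset_Ici_self
  refine ⟨fun x hx y hy hxy => ?_, ?_, ?_⟩
  · rw [hFG x hx, hFG y hy]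
    exact hG_mono (inv_pos.2 (mem_Ioi.1 hy)) (inv_pos.2 (mem_Ioi.1 hx)) (inv_anti₀ hx hxy)
  · refine ((tendsto_mul_deriv_sub_nhdsGT_zero (hC2.of_le one_le_two) hM0).comp
      tendsto_inv_atTop_nhdsGT_zero).congr' ?_
    filter_upwards [eventually_gt_atTop 0] with x hx using (hFG x hx).symm
  · refine ((tendsto_mul_deriv_sub_atTop hC2 hM0 hfin).comp tendsto_inv_nhdsGT_zero).congr' ?_
    filter_upwards [self_mem_nhdsWithin] with x hx using (hFG x hx).symm

/-- For a twice continuously differentiable Orlicz function `M` with `M'(0)=0` and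
`∫_0^∞ y M''(y) dy < ∞`, the function `F̄(x) = (1/x) M'(1/x) − M(1/x)` is nonincreasing on
`(0,∞)`, tends to `0` at `∞` and to `∫_0^∞ y M''(y) dy` at `0⁺`; after normalization,
`1 − F̄` is a cumulative distribution function on `(0,∞)`. -/
theorem orlicz_tail_is_distribution
    (M : ℝ → ℝ)
    (hconv : ConvexOn ℝ (Set.Ici 0) M)
    (hM0 : M 0 = 0)
    (hMpos : ∀ t > (0:ℝ), 0 < M t)
    (hC2 : ContDiffOn ℝ 2 M (Set.Ici 0))
    (hd0 : deriv M 0 = 0)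
    (hfin : IntegrableOn (fun y => y * deriv (deriv M) y) (Set.Ioi (0:ℝ)))
    (F : ℝ → ℝ)
    (hF : ∀ x > (0:ℝ), F x = (1/x) * deriv M (1/x) - M (1/x)) :
    AntitoneOn F (Set.Ioi 0) ∧
    Tendsto F atTop (nhds 0) ∧
    Tendsto F (nhdsWithin 0 (Set.Ioi 0))
      (nhds (∫ y in Set.Ioi (0:ℝ), y * deriv (deriv M) y)) :=
  orlicz_tail_is_distribution_general M hconv hM0 hC2 hfin F hF
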